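/- If the evaluation of pattern P1 over G does not enlarge the data graph (range of ⟦P1⟧_G equals G), then AND is symmetric: ⟦P1 AND P2⟧_G = ⟦P2 AND P1⟧_G; in particular this holds when P1 and P2 are basic patterns, in which case ⟦P1 AND P2⟧_G equals the set of all total mappings from the query graph P1 ∪ P2 to G. -/

import Mathlib

universe u

structure RDFGraph (A : Type u) where
  N : Set A
  T : Set (A × A × A)
  subj_mem : ∀ t ∈ T, t.1 ∈ N
  obj_mem : ∀ t ∈ T, t.2.2 ∈ N

namespace RDFGraph

variable {A : Type u}

/-- The labels of a graph: its nodes together with the predicates of its triples. -/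
def labels (X : RDFGraph A) : Set A :=
  X.N ∪ {p | ∃ t ∈ X.T, t.2.1 = p}

/-- Componentwise union of graphs. -/
def union (X1 X2 : RDFGraph A) : RDFGraph A where
  N := X1.N ∪ X2.N
  T := X1.T ∪ X2.T
  subj_mem := by
    rintro t (h | h)
    · exact Or.inl (X1.subj_mem t h)
    · exact Or.inr (X2.subj_mem t h)
  obj_mem := by
    rintro t (h | h)
    · exact Or.inl (X1.obj_mem t h)
    · exact Or.inr (X2.obj_mem t h)

/-- Componentwise intersection of graphs. -/
def inter (X1 X2 : RDFGraph A) : RDFGraph A where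
  N := X1.N ∩ X2.N
  T := X1.T ∩ X2.T
  subj_mem := fun t h => ⟨X1.subj_mem t h.1, X2.subj_mem t h.2⟩
  obj_mem := fun t h => ⟨X1.obj_mem t h.1, X2.obj_mem t h.2⟩

/-- `X'` is a subgraph of `X`. -/
def Subgraph (X' X : RDFGraph A) : Prop := X'.N ⊆ X.N ∧ X'.T ⊆ X.T

end RDFGraph

variable {A : Type u}

/-- A morphism of graphs on `A` : a partial function (modelled as an `Option`-valued
function, `none` meaning undefined, and undefined outside the labels of the domain)
from the labels of `X` to the labels of `Y`, preserving nodes and triples. -/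
def IsMorphism (X Y : RDFGraph A) (f : A → Option A) : Prop :=
  (∀ x, x ∉ X.labels → f x = none) ∧
  (∀ x y, f x = some y → y ∈ Y.labels) ∧
  (∀ n ∈ X.N, ∀ y, f n = some y → y ∈ Y.N) ∧
  (∀ t ∈ X.T, ∀ s' p' o', f t.1 = some s' → f t.2.1 = some p' → f t.2.2 = some o' →
    ((s', p', o') : A × A × A) ∈ Y.T)

/-- Composition of partial functions: defined iff both steps are defined. -/
def pcomp (g f : A → Option A) : A → Option A := fun x => (f x).bind g

open Classical in
/-- The identity partial function on the labels of `X`. -/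
noncomputable def idOn (X : RDFGraph A) : A → Option A :=
  fun x => if x ∈ X.labels then some x else none

open Classical in
/-- Restriction of a partial function to the labels of `X'`. -/
noncomputable def restrictMap (X' : RDFGraph A) (f : A → Option A) : A → Option A :=
  fun x => if x ∈ X'.labels then f x else none

/-- Labels are built from three disjoint countably infinite sets:
resource identifiers `i`, blanks `b` and variables `v`. -/
inductive Lbl : Type where
  | i : ℕ → Lbl
  | b : ℕ → Lbl
  | v : ℕ → Lbl
deriving DecidableEq

/-- Being a resource identifier. -/
def Lbl.isI : Lbl → Prop
  | .i _ => True
  | _ => False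

/-- Being a variable. -/
def Lbl.isV : Lbl → Prop
  | .v _ => True
  | _ => False

/-- A data graph is a (finite) graph whose labels are resource identifiers or blanks. -/
def IsDataGraph (Y : RDFGraph Lbl) : Prop := ∀ x ∈ Y.labels, ¬ x.isV

/-- A query graph is a finite graph on `Lbl`. -/
def IsQueryGraph (X : RDFGraph Lbl) : Prop := X.N.Finite ∧ X.T.Finite

/-- A mapping from a query graph `X` to a data graph `Y` is a graph morphism fixing
the resource identifiers. -/
def IsMapping (X Y : RDFGraph Lbl) (m : Lbl → Option Lbl) : Prop :=
  IsMorphism X Y m ∧ ∀ x ∈ X.labels, x.isI → m x = some x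

/-- The blanks and variables among the labels of `X`. -/
def bvLabels (X : RDFGraph Lbl) : Set Lbl := {x | x ∈ X.labels ∧ ¬ x.isI}

/-- Two mappings are compatible if they agree (including definedness) on the common
blanks and variables of their domains. -/
def Compatible (X1 X2 : RDFGraph Lbl) (m1 m2 : Lbl → Option Lbl) : Prop :=
  ∀ x ∈ bvLabels X1 ∩ bvLabels X2, m1 x = m2 x

open Classical in
/-- The join of two compatible mappings: it coincides with `m1` on the labels of `X1`
and with `m2` elsewhere. -/
noncomputable def joinMap (X1 : RDFGraph Lbl) (m1 m2 : Lbl → Option Lbl) : Lbl → Option Lbl :=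
  fun x => if x ∈ X1.labels then m1 x else m2 x

/-- Join of two sets of mappings. -/
noncomputable def JoinSet (X1 X2 : RDFGraph Lbl) (M1 M2 : Set (Lbl → Option Lbl)) :
    Set (Lbl → Option Lbl) :=
  {m | ∃ m1 ∈ M1, ∃ m2 ∈ M2, Compatible X1 X2 m1 m2 ∧ m = joinMap X1 m1 m2}

/-- Restriction of a set of mappings to a subgraph `X'`. -/
noncomputable def RestrictSet (X' : RDFGraph Lbl) (M : Set (Lbl → Option Lbl)) :
    Set (Lbl → Option Lbl) :=
  (restrictMap X') '' M

open Classical in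
/-- Extension by undefined functions `Ext_⊥(m, X')`: new labels in `I` are fixed,
new blanks and variables are left undefined. -/
noncomputable def extBot (X X' : RDFGraph Lbl) (m : Lbl → Option Lbl) : Lbl → Option Lbl :=
  fun x => if x ∈ X.labels then m x else if x ∈ X'.labels ∧ x.isI then some x else none

/-- Union of two sets of mappings: set-theoretic union of their extensions by
undefined functions to the union of their domains. -/
noncomputable def UnionSet (X1 X2 : RDFGraph Lbl) (M1 M2 : Set (Lbl → Option Lbl)) :
    Set (Lbl → Option Lbl) :=
  (extBot X1 (X1.union X2)) '' M1 ∪ (extBot X2 (X1.union X2)) '' M2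

/-- A total mapping: a mapping defined on all the labels of its domain. -/
def TotalMapping (X Y : RDFGraph Lbl) (m : Lbl → Option Lbl) : Prop :=
  IsMapping X Y m ∧ ∀ x ∈ X.labels, m x ≠ none

/-! A total mapping from `P1 ∪ P2` restricts to total mappings from `P1` and from `P2`, which are
compatible and whose join gives it back. Conversely, compatible mappings agree on every shared
label (on resource identifiers because both fix them), so their join restricts to each of them
and is a total mapping from `P1 ∪ P2`. Symmetry of AND then comes from commutativity of graph
union. -/

open Set

namespace RDFGraph

variable {A : Type u}

theorem union_comm (X1 X2 : RDFGraph A) : X1.union X2 = X2.union X1 := by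
  simp only [union, Set.union_comm]

theorem labels_union (X1 X2 : RDFGraph A) :
    (X1.union X2).labels = X1.labels ∪ X2.labels := by
  ext x
  simp only [labels, union, mem_union, mem_ofPred_eq]
  constructor
  · rintro ((h | h) | ⟨t, ht | ht, rfl⟩)
    exacts [Or.inl (Or.inl h), Or.inr (Or.inl h), Or.inl (Or.inr ⟨t, ht, rfl⟩),
      Or.inr (Or.inr ⟨t, ht, rfl⟩)]
  · rintro ((h | ⟨t, ht, rfl⟩) | h | ⟨t, ht, rfl⟩)
    exacts [Or.inl (Or.inl h), Or.inr ⟨t, Or.inl ht, rfl⟩, Or.inl (Or.inr h),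
      Or.inr ⟨t, Or.inr ht, rfl⟩]

theorem subgraph_union_left (X1 X2 : RDFGraph A) : X1.Subgraph (X1.union X2) :=
  ⟨subset_union_left, subset_union_left⟩

theorem subgraph_union_right (X1 X2 : RDFGraph A) : X2.Subgraph (X1.union X2) :=
  ⟨subset_union_right, subset_union_right⟩

theorem Subgraph.labels_subset {X' X : RDFGraph A} (h : X'.Subgraph X) :
    X'.labels ⊆ X.labels := by
  rintro x (hx | ⟨t, ht, rfl⟩)
  · exact Or.inl (h.1 hx)
  · exact Or.inr ⟨t, h.2 ht, rfl⟩

theorem subj_mem_labels {X : RDFGraph A} {t : A × A × A} (ht : t ∈ X.T) : t.1 ∈ X.labels :=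
  Or.inl (X.subj_mem t ht)

theorem pred_mem_labels {X : RDFGraph A} {t : A × A × A} (ht : t ∈ X.T) : t.2.1 ∈ X.labels :=
  Or.inr ⟨t, ht, rfl⟩

theorem obj_mem_labels {X : RDFGraph A} {t : A × A × A} (ht : t ∈ X.T) : t.2.2 ∈ X.labels :=
  Or.inl (X.obj_mem t ht)

end RDFGraph

open RDFGraph

theorem restrictMap_of_mem {A : Type u} {X : RDFGraph A} {f : A → Option A} {x : A}
    (hx : x ∈ X.labels) : restrictMap X f x = f x := by
  simp [restrictMap, hx]

theorem restrictMap_of_notMem {A : Type u} {X : RDFGraph A} {f : A → Option A} {x : A}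
    (hx : x ∉ X.labels) : restrictMap X f x = none := by
  simp [restrictMap, hx]

namespace IsMorphism

variable {A : Type u} {X X' X1 X2 Y : RDFGraph A} {f g f1 f2 : A → Option A}

theorem mono (hf : IsMorphism X Y f) (hsub : X'.Subgraph X) (heq : EqOn g f X'.labels)
    (hout : ∀ x ∉ X'.labels, g x = none) : IsMorphism X' Y g := by
  obtain ⟨-, hval, hN, hT⟩ := hf
  refine ⟨hout, fun x y hxy => ?_, fun n hn y hy => ?_, fun t ht s p o hs hp ho => ?_⟩
  · by_cases hx : x ∈ X'.labels
    · exact hval x y (heq hx ▸ hxy)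
    · simp [hout x hx] at hxy
  · exact hN n (hsub.1 hn) y (heq (Or.inl hn) ▸ hy)
  · simp only [heq (subj_mem_labels ht), heq (pred_mem_labels ht), heq (obj_mem_labels ht)]
      at hs hp ho
    exact hT t (hsub.2 ht) s p o hs hp ho

theorem union (h1 : IsMorphism X1 Y f1) (h2 : IsMorphism X2 Y f2) (heq1 : EqOn f f1 X1.labels)
    (heq2 : EqOn f f2 X2.labels) (hout : ∀ x ∉ (X1.union X2).labels, f x = none) :
    IsMorphism (X1.union X2) Y f := by
  obtain ⟨-, hval1, hN1, hT1⟩ := h1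
  obtain ⟨-, hval2, hN2, hT2⟩ := h2
  refine ⟨hout, fun x y hxy => ?_, ?_, ?_⟩
  · have hx : x ∈ (X1.union X2).labels := by_contra fun hx => by simp [hout x hx] at hxy
    rcases (labels_union X1 X2 ▸ hx : x ∈ X1.labels ∪ X2.labels) with hx | hx
    · exact hval1 x y (heq1 hx ▸ hxy)
    · exact hval2 x y (heq2 hx ▸ hxy)
  · rintro n (hn | hn) y hy
    · exact hN1 n hn y (heq1 (Or.inl hn) ▸ hy)
    · exact hN2 n hn y (heq2 (Or.inl hn) ▸ hy)
  · rintro t (ht | ht) s p o hs hp ho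
    · simp only [heq1 (subj_mem_labels ht), heq1 (pred_mem_labels ht),
        heq1 (obj_mem_labels ht)] at hs hp ho
      exact hT1 t ht s p o hs hp ho
    · simp only [heq2 (subj_mem_labels ht), heq2 (pred_mem_labels ht),
        heq2 (obj_mem_labels ht)] at hs hp ho
      exact hT2 t ht s p o hs hp ho

end IsMorphism

namespace TotalMapping

variable {X X' X1 X2 G : RDFGraph Lbl} {f g f1 f2 : Lbl → Option Lbl}

theorem mono (hf : TotalMapping X G f) (hsub : X'.Subgraph X) (heq : EqOn g f X'.labels)
    (hout : ∀ x ∉ X'.labels, g x = none) : TotalMapping X' G g :=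
  ⟨⟨hf.1.1.mono hsub heq hout,
      fun x hx hi => (heq hx).trans (hf.1.2 x (hsub.labels_subset hx) hi)⟩,
    fun x hx => heq hx ▸ hf.2 x (hsub.labels_subset hx)⟩

theorem restrict (hf : TotalMapping X G f) (hsub : X'.Subgraph X) :
    TotalMapping X' G (restrictMap X' f) :=
  hf.mono hsub (fun _ => restrictMap_of_mem) fun _ => restrictMap_of_notMem

theorem union (h1 : TotalMapping X1 G f1) (h2 : TotalMapping X2 G f2)
    (heq1 : EqOn f f1 X1.labels) (heq2 : EqOn f f2 X2.labels)
    (hout : ∀ x ∉ (X1.union X2).labels, f x = none) :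
    TotalMapping (X1.union X2) G f := by
  refine ⟨⟨h1.1.1.union h2.1.1 heq1 heq2 hout, ?_⟩, ?_⟩ <;> rw [labels_union] <;>
    rintro x (hx | hx)
  · exact (heq1 hx).trans ∘ h1.1.2 x hx
  · exact (heq2 hx).trans ∘ h2.1.2 x hx
  · exact heq1 hx ▸ h1.2 x hx
  · exact heq2 hx ▸ h2.2 x hx

end TotalMapping

theorem Compatible.eqOn {X1 X2 G : RDFGraph Lbl} {m1 m2 : Lbl → Option Lbl}
    (hc : Compatible X1 X2 m1 m2) (h1 : IsMapping X1 G m1) (h2 : IsMapping X2 G m2) :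
    EqOn m1 m2 (X1.labels ∩ X2.labels) := by
  rintro x ⟨hx1, hx2⟩
  by_cases hi : x.isI
  · rw [h1.2 x hx1 hi, h2.2 x hx2 hi]
  · exact hc x ⟨⟨hx1, hi⟩, hx2, hi⟩

theorem compatible_restrictMap (X1 X2 : RDFGraph Lbl) (f : Lbl → Option Lbl) :
    Compatible X1 X2 (restrictMap X1 f) (restrictMap X2 f) := fun _ hx => by
  rw [restrictMap_of_mem hx.1.1, restrictMap_of_mem hx.2.1]

section joinMap

variable {X1 X2 : RDFGraph Lbl} {m1 m2 : Lbl → Option Lbl}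

theorem eqOn_joinMap_left : EqOn (joinMap X1 m1 m2) m1 X1.labels := fun _ hx => if_pos hx

theorem eqOn_joinMap_right (h : EqOn m1 m2 (X1.labels ∩ X2.labels)) :
    EqOn (joinMap X1 m1 m2) m2 X2.labels := fun x hx2 => by
  by_cases hx1 : x ∈ X1.labels
  · exact (eqOn_joinMap_left hx1).trans (h ⟨hx1, hx2⟩)
  · exact if_neg hx1

theorem joinMap_eq_none (h2 : ∀ x ∉ X2.labels, m2 x = none) {x : Lbl}
    (hx : x ∉ (X1.union X2).labels) : joinMap X1 m1 m2 x = none := by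
  rw [labels_union, mem_union, not_or] at hx
  rw [joinMap, if_neg hx.1, h2 x hx.2]

theorem joinMap_restrictMap {f : Lbl → Option Lbl}
    (hf : ∀ x ∉ (X1.union X2).labels, f x = none) :
    joinMap X1 (restrictMap X1 f) (restrictMap X2 f) = f := by
  funext x
  by_cases hx1 : x ∈ X1.labels
  · rw [eqOn_joinMap_left hx1, restrictMap_of_mem hx1]
  by_cases hx2 : x ∈ X2.labels
  · rw [joinMap, if_neg hx1, restrictMap_of_mem hx2]
  rw [joinMap, if_neg hx1, restrictMap_of_notMem hx2, hf x]
  rw [labels_union, mem_union, not_or]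
  exact ⟨hx1, hx2⟩

end joinMap

theorem joinSet_totalMapping (X1 X2 G : RDFGraph Lbl) :
    JoinSet X1 X2 {m | TotalMapping X1 G m} {m | TotalMapping X2 G m} =
      {m | TotalMapping (X1.union X2) G m} := by
  ext m
  constructor
  · rintro ⟨m1, h1, m2, h2, hc, rfl⟩
    exact h1.union h2 eqOn_joinMap_left (eqOn_joinMap_right (hc.eqOn h1.1 h2.1))
      fun _ => joinMap_eq_none h2.1.1.1
  · intro hm
    exact ⟨_, hm.restrict (subgraph_union_left X1 X2), _,
      hm.restrict (subgraph_union_right X1 X2), compatible_restrictMap X1 X2 m,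
      (joinMap_restrictMap hm.1.1.1).symm⟩

theorem and_basic_symm_general (P1 P2 G : RDFGraph Lbl) :
    JoinSet P1 P2 {m | TotalMapping P1 G m} {m | TotalMapping P2 G m} =
      JoinSet P2 P1 {m | TotalMapping P2 G m} {m | TotalMapping P1 G m} ∧
    JoinSet P1 P2 {m | TotalMapping P1 G m} {m | TotalMapping P2 G m} =
      {m | TotalMapping (P1.union P2) G m} := by
  rw [joinSet_totalMapping, joinSet_totalMapping, RDFGraph.union_comm]
  exact ⟨rfl, rfl⟩

/-- For basic patterns `P1` and `P2` the evaluation over `G` does not enlarge the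
data graph, so AND is symmetric: the value of `P1 AND P2` over `G` (the join of the
sets of all total mappings of `P1` and of `P2` into `G`) equals the value of
`P2 AND P1` over `G`, and both equal the set of all total mappings from the query
graph `P1 ∪ P2` to `G`. -/
theorem and_basic_symm (P1 P2 G : RDFGraph Lbl) (hG : IsDataGraph G) :
    JoinSet P1 P2 {m | TotalMapping P1 G m} {m | TotalMapping P2 G m} =
      JoinSet P2 P1 {m | TotalMapping P2 G m} {m | TotalMapping P1 G m} ∧
    JoinSet P1 P2 {m | TotalMapping P1 G m} {m | TotalMapping P2 G m} =
      {m | TotalMapping (P1.union P2) G m} :=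
  and_basic_symm_general P1 P2 G
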